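/- Let E be an m×n real random matrix that is (C₁, c₁, γ)-concentrated for constants C₁, c₁, γ > 0, and let A be a deterministic m×n real matrix of rank r. Let u₁, …, u_r, u_{−1}, …, u_{−r} be orthonormal eigenvectors of Ã with Ã u_k = σ_k u_k and Ã u_{−k} = −σ_k u_{−k} for k = 1, …, r, where σ₁ ≥ ⋯ ≥ σ_r > 0 are the nonzero singular values of A, and let U be the (m+n)×2r matrix whose columns are u₁, …, u_r, u_{−1}, …, u_{−r}. Then, for any t > 0, ℙ(‖Uᵀ Ẽ U‖ > t·r^{1/γ}) ≤ 2C₁·9^{2r}·exp(−(c₁/2ᵞ)·r·tᵞ/2ᵞ). -/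

import Mathlib

/-!
The compressed matrix `B = Uᵀ Ẽ U` is symmetric of size `2r`, so its norm is at most twice the
largest value of `|xᵀ B x|` over a `1/4`-net of the unit sphere of `ℝ^{2r}`, and a volume argument
gives such a net with at most `9^{2r}` points. For a unit vector `x`, write `U x = (p, q)`; then
`|p|² + |q|² = 1` and `xᵀ B x = 2 pᵀ E q` with `2 |p| |q| ≤ 1`, so each point of the net has the
concentration tail of `E` at level `s / 2`, where `s = t r^{1/γ}`. A union bound over the net
finishes the proof.
-/

open MeasureTheory ProbabilityTheory Matrix

theorem Matrix.isHermitian_transpose_mul_self {m n : ℕ} (A : Matrix (Fin m) (Fin n) ℝ) :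
    (Aᵀ * A).IsHermitian := by
  rw [← Matrix.conjTranspose_eq_transpose_of_trivial]
  exact Matrix.isHermitian_conjTranspose_mul_self A

noncomputable def sval {m n : ℕ} (A : Matrix (Fin m) (Fin n) ℝ) (k : ℕ) : ℝ :=
  if h : k - 1 < n then
    Real.sqrt (((Matrix.isHermitian_transpose_mul_self A).eigenvalues ∘
      Tuple.sort (Matrix.isHermitian_transpose_mul_self A).eigenvalues)
      (Fin.rev ⟨k - 1, h⟩))
  else 0

noncomputable def spNorm {m n : Type*} [Fintype m] [Fintype n] [DecidableEq n]
    (A : Matrix m n ℝ) : ℝ :=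
  ‖LinearMap.toContinuousLinearMap (Matrix.toEuclideanLin A)‖

noncomputable def sinAngle {d : ℕ} (u v : Fin d → ℝ) : ℝ :=
  Real.sqrt (1 - (u ⬝ᵥ v) ^ 2 / ((u ⬝ᵥ u) * (v ⬝ᵥ v)))

def Concentrated {Ω : Type*} [MeasurableSpace Ω] (μ : Measure Ω) {m n : ℕ}
    (E : Ω → Matrix (Fin m) (Fin n) ℝ) (C₁ c₁ γ : ℝ) : Prop :=
  ∀ (u : Fin m → ℝ) (v : Fin n → ℝ), u ⬝ᵥ u = 1 → v ⬝ᵥ v = 1 →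
    ∀ t : ℝ, 0 < t →
      μ {ω | t < |u ⬝ᵥ ((E ω) *ᵥ v)|} ≤ ENNReal.ofReal (C₁ * Real.exp (-c₁ * t ^ γ))

noncomputable def symMat {m n : ℕ} (E : Matrix (Fin m) (Fin n) ℝ) :
    Matrix (Fin (m + n)) (Fin (m + n)) ℝ :=
  (Matrix.reindex finSumFinEquiv finSumFinEquiv) (Matrix.fromBlocks 0 E Eᵀ 0)

noncomputable def eigVal {d : ℕ} (M : Matrix (Fin d) (Fin d) ℝ) (k : ℕ) : ℝ := by
  classical
  exact if hM : M.IsHermitian then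
    (if h : k - 1 < d then
      ((hM.eigenvalues ∘ Tuple.sort hM.eigenvalues) (Fin.rev ⟨k - 1, h⟩))
    else 0)
  else 0

noncomputable def toE {n : ℕ} (v : Fin n → ℝ) : EuclideanSpace ℝ (Fin n) :=
  (WithLp.equiv 2 (Fin n → ℝ)).symm v

noncomputable def projSub {n : ℕ} (K : Submodule ℝ (EuclideanSpace ℝ (Fin n))) :
    EuclideanSpace ℝ (Fin n) →L[ℝ] EuclideanSpace ℝ (Fin n) :=
  K.subtypeL.comp K.orthogonalProjectionOnto

noncomputable def projSpan {n : ℕ} (S : Set (Fin n → ℝ)) :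
    EuclideanSpace ℝ (Fin n) →L[ℝ] EuclideanSpace ℝ (Fin n) :=
  projSub (Submodule.span ℝ (toE '' S))

noncomputable def sinAngleSub {n : ℕ} (S T : Set (Fin n → ℝ)) : ℝ :=
  ‖projSpan S - projSpan T‖

def IsBernoulliMatrix {Ω : Type*} [MeasurableSpace Ω] (μ : Measure Ω) {n : ℕ}
    (E : Ω → Matrix (Fin n) (Fin n) ℝ) : Prop :=
  (∀ i j, Measurable fun ω => E ω i j) ∧
  iIndepFun (β := fun _ : Fin n × Fin n => ℝ) (m := fun _ => (inferInstance : MeasurableSpace ℝ))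
    (fun p ω => E ω p.1 p.2) μ ∧
  (∀ i j, μ {ω | E ω i j = 1} = ENNReal.ofReal (1/2) ∧
          μ {ω | E ω i j = -1} = ENNReal.ofReal (1/2))

open Metric Module
open scoped NNReal ENNReal RealInnerProductSpace

theorem Finset.card_mul_pow_le_of_pairwise_lt_dist {E : Type*} [NormedAddCommGroup E]
    [NormedSpace ℝ E] [FiniteDimensional ℝ E] {ε : ℝ} (hε : 0 < ε) (F : Finset E)
    (hF : ∀ x ∈ F, ‖x‖ ≤ 1) (hsep : (F : Set E).Pairwise fun x y => ε < dist x y) :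
    (F.card : ℝ) * ε ^ finrank ℝ E ≤ (2 + ε) ^ finrank ℝ E := by
  borelize E
  set μ : Measure E := Measure.addHaar
  set d := finrank ℝ E
  have hvol (x : E) {ρ : ℝ} (hρ : 0 < ρ) : μ (ball x ρ) = ENNReal.ofReal (ρ ^ d) * μ (ball 0 1) :=
    Measure.addHaar_ball_of_pos μ x hρ
  have hdisj : (F : Set E).PairwiseDisjoint fun x => ball x (ε / 2) := fun x hx y hy hxy =>
    ball_disjoint_ball (by linarith [hsep hx hy hxy])
  have hsub : ⋃ x ∈ F, ball x (ε / 2) ⊆ ball 0 (1 + ε / 2) := by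
    refine Set.iUnion₂_subset fun x hx z hz => ?_
    rw [mem_ball, dist_eq_norm] at hz
    rw [mem_ball_zero_iff]
    linarith [norm_le_norm_add_norm_sub' z x, hF x hx]
  have hμ : (F.card : ℝ≥0∞) * ENNReal.ofReal ((ε / 2) ^ d) * μ (ball 0 1) ≤
      ENNReal.ofReal ((1 + ε / 2) ^ d) * μ (ball 0 1) := calc
    _ = ∑ x ∈ F, μ (ball x (ε / 2)) := by
      simp only [hvol _ (half_pos hε), Finset.sum_const, nsmul_eq_mul, mul_assoc]
    _ = μ (⋃ x ∈ F, ball x (ε / 2)) :=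
      (measure_biUnion_finset hdisj fun _ _ => measurableSet_ball).symm
    _ ≤ _ := (measure_mono hsub).trans_eq (hvol 0 (by positivity))
  rw [ENNReal.mul_le_mul_iff_left (measure_ball_pos μ 0 one_pos).ne' measure_ball_lt_top.ne,
    ← ENNReal.ofReal_natCast, ← ENNReal.ofReal_mul (by positivity),
    ENNReal.ofReal_le_ofReal_iff (by positivity), div_pow, ← mul_div_assoc,
    div_le_iff₀ (by positivity), ← mul_pow] at hμ
  calc (F.card : ℝ) * ε ^ d ≤ ((1 + ε / 2) * 2) ^ d := hμ
    _ = (2 + ε) ^ d := by ring_nf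

theorem Metric.packingNumber_le_of_subset_closedBall {E : Type*} [NormedAddCommGroup E]
    [NormedSpace ℝ E] [FiniteDimensional ℝ E] {ε : ℝ≥0} (hε : 0 < ε) {A : Set E}
    (hA : A ⊆ closedBall 0 1) :
    packingNumber ε A ≤ ⌊(1 + 2 / (ε : ℝ)) ^ finrank ℝ E⌋₊ := by
  simp only [packingNumber, iSup_le_iff]
  intro C hCA hC
  by_contra! hlt
  obtain ⟨F, hFC, hF⟩ := Set.exists_subset_encard_eq (Order.add_one_le_of_lt hlt)
  have hFfin : F.Finite := Set.finite_of_encard_eq_coe hF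
  have hcard := Finset.card_mul_pow_le_of_pairwise_lt_dist (NNReal.coe_pos.2 hε) hFfin.toFinset
    (fun x hx => mem_closedBall_zero_iff.1 (hA (hCA (hFC (by simpa using hx)))))
    fun x hx y hy hxy => by
      have : (ε : ℝ≥0∞) < edist x y := (hC.subset hFC) (by simpa using hx) (by simpa using hy) hxy
      rwa [edist_nndist, ENNReal.coe_lt_coe, ← NNReal.coe_lt_coe, coe_nndist] at this
  rw [hFfin.encard_eq_coe_toFinset_card] at hF
  have hk : (hFfin.toFinset.card : ℝ) = ⌊(1 + 2 / (ε : ℝ)) ^ finrank ℝ E⌋₊ + 1 := by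
    exact_mod_cast hF
  have hle : (hFfin.toFinset.card : ℝ) ≤ (1 + 2 / (ε : ℝ)) ^ finrank ℝ E := by
    rwa [one_add_div (by positivity), div_pow, le_div_iff₀ (by positivity), add_comm]
  exact (Nat.lt_floor_add_one _).not_ge (hk ▸ hle)

theorem Metric.exists_finset_isCover_sphere {E : Type*} [NormedAddCommGroup E]
    [NormedSpace ℝ E] [FiniteDimensional ℝ E] {ε : ℝ≥0} (hε : 0 < ε) :
    ∃ N : Finset E, ↑N ⊆ sphere (0 : E) 1 ∧ N.card ≤ ⌊(1 + 2 / (ε : ℝ)) ^ finrank ℝ E⌋₊ ∧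
      IsCover ε (sphere 0 1) (N : Set E) := by
  have h := (coveringNumber_le_packingNumber ε _).trans
    (packingNumber_le_of_subset_closedBall hε (sphere_subset_closedBall (x := (0 : E))))
  obtain ⟨C, hCA, hCfin, hCcov, hCcard⟩ :=
    exists_set_encard_eq_coveringNumber (ne_top_of_le_ne_top (by simp) h)
  refine ⟨hCfin.toFinset, by simpa using hCA, ?_, by simpa using hCcov⟩
  rw [← hCcard, hCfin.encard_eq_coe_toFinset_card] at h
  exact_mod_cast h

theorem ContinuousLinearMap.norm_le_of_forall_sphere_abs_inner_self_le {E : Type*}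
    [NormedAddCommGroup E] [InnerProductSpace ℝ E] {T : E →L[ℝ] E}
    (hT : (T : E →ₗ[ℝ] E).IsSymmetric) {M : ℝ} (hM : 0 ≤ M)
    (h : ∀ v, ‖v‖ = 1 → |⟪T v, v⟫| ≤ M) : ‖T‖ ≤ M := by
  rw [T.norm_eq_iSup_rayleighQuotient hT]
  refine ciSup_le fun x => ?_
  rcases eq_or_ne x 0 with rfl | hx
  · simpa using hM
  have hxn : ‖x‖ ≠ 0 := norm_ne_zero_iff.2 hx
  rw [← T.rayleigh_smul x (inv_ne_zero hxn)]
  have hv : ‖‖x‖⁻¹ • x‖ = 1 := by rw [norm_smul, norm_inv, norm_norm, inv_mul_cancel₀ hxn]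
  simpa [rayleighQuotient, reApplyInnerSelf_apply, hv] using h _ hv

theorem ContinuousLinearMap.one_sub_two_mul_mul_norm_le_of_isCover_sphere {E : Type*}
    [NormedAddCommGroup E] [InnerProductSpace ℝ E] {T : E →L[ℝ] E}
    (hT : (T : E →ₗ[ℝ] E).IsSymmetric) {ε : ℝ≥0} {N : Set E} (hNs : N ⊆ sphere 0 1)
    (hN : IsCover ε (sphere 0 1) N) {a : ℝ} (ha : 0 ≤ a) (h : ∀ x ∈ N, |⟪T x, x⟫| ≤ a) :
    (1 - 2 * ε) * ‖T‖ ≤ a := by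
  suffices ‖T‖ ≤ a + 2 * ε * ‖T‖ by linarith
  refine T.norm_le_of_forall_sphere_abs_inner_self_le hT (by positivity) fun v hv => ?_
  obtain ⟨x, hxN, hvx⟩ := hN (mem_sphere_zero_iff_norm.2 hv)
  have hx : ‖x‖ = 1 := mem_sphere_zero_iff_norm.1 (hNs hxN)
  have hvx : ‖v - x‖ ≤ ε := by
    change edist v x ≤ ε at hvx
    rwa [edist_nndist, ENNReal.coe_le_coe, ← NNReal.coe_le_coe, coe_nndist, dist_eq_norm] at hvx
  have hdiff : ⟪T v, v⟫ - ⟪T x, x⟫ = ⟪T (v - x), v + x⟫ := by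
    have := hT v x
    simp only [ContinuousLinearMap.coe_coe] at this
    rw [map_sub, inner_sub_left, inner_add_right, inner_add_right, this, real_inner_comm (T x) v]
    ring
  calc |⟪T v, v⟫| ≤ |⟪T x, x⟫| + |⟪T (v - x), v + x⟫| := by
        rw [← hdiff]; linarith [abs_sub_abs_le_abs_sub ⟪T v, v⟫ ⟪T x, x⟫]
    _ ≤ a + ‖T‖ * ε * 2 := by
        gcongr
        · exact h x hxN
        · calc |⟪T (v - x), v + x⟫| ≤ ‖T (v - x)‖ * ‖v + x‖ := abs_real_inner_le_norm _ _
            _ ≤ ‖T‖ * ‖v - x‖ * (‖v‖ + ‖x‖) := by gcongr; exacts [T.le_opNorm _, norm_add_le _ _]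
            _ ≤ ‖T‖ * ε * 2 := by rw [hv, hx]; gcongr; norm_num
    _ = a + 2 * ε * ‖T‖ := by ring

theorem dotProduct_self_pos_of_ne_zero {ι : Type*} [Fintype ι] {p : ι → ℝ} (hp : p ≠ 0) :
    0 < p ⬝ᵥ p :=
  dotProduct_star_self_pos_iff.2 hp

theorem dotProduct_self_inv_sqrt_smul {ι : Type*} [Fintype ι] {p : ι → ℝ} (hp : p ≠ 0) :
    ((√(p ⬝ᵥ p))⁻¹ • p) ⬝ᵥ ((√(p ⬝ᵥ p))⁻¹ • p) = 1 := by
  have hpp := dotProduct_self_pos_of_ne_zero hp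
  rw [smul_dotProduct, dotProduct_smul, smul_eq_mul, smul_eq_mul, ← mul_assoc, ← mul_inv,
    Real.mul_self_sqrt hpp.le, inv_mul_cancel₀ hpp.ne']

namespace Matrix

theorem transpose_symMat {m n : ℕ} (M : Matrix (Fin m) (Fin n) ℝ) : (symMat M)ᵀ = symMat M := by
  simp [symMat, transpose_submatrix, fromBlocks_transpose]

theorem dotProduct_symMat_mulVec {m n : ℕ} (M : Matrix (Fin m) (Fin n) ℝ)
    (v : Fin (m + n) → ℝ) :
    v ⬝ᵥ (symMat M *ᵥ v) =
      2 * ((v ∘ finSumFinEquiv ∘ Sum.inl) ⬝ᵥ (M *ᵥ (v ∘ finSumFinEquiv ∘ Sum.inr))) := by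
  rw [symMat, reindex_apply, submatrix_mulVec_equiv, dotProduct_comp_equiv_symm, Equiv.symm_symm,
    ← Sum.elim_comp_inl_inr (v ∘ finSumFinEquiv), fromBlocks_mulVec, zero_mulVec, zero_mulVec,
    zero_add, add_zero, sumElim_dotProduct_sumElim, dotProduct_mulVec _ Mᵀ, vecMul_transpose,
    dotProduct_comm (M *ᵥ _)]
  simp only [Sum.elim_comp_inl, Sum.elim_comp_inr]
  exact (two_mul _).symm

theorem dotProduct_self_finSumFinEquiv {m n : ℕ} (v : Fin (m + n) → ℝ) :
    v ⬝ᵥ v = (v ∘ finSumFinEquiv ∘ Sum.inl) ⬝ᵥ (v ∘ finSumFinEquiv ∘ Sum.inl) +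
      (v ∘ finSumFinEquiv ∘ Sum.inr) ⬝ᵥ (v ∘ finSumFinEquiv ∘ Sum.inr) := by
  rw [← sumElim_dotProduct_sumElim, ← comp_equiv_dotProduct_comp_equiv v v finSumFinEquiv,
    ← Sum.elim_comp_inl_inr (v ∘ finSumFinEquiv)]
  rfl

variable {κ N : Type*} [Fintype N]

/-- The matrix `Uᵀ M U`, where `U` is the matrix with columns `e a`. -/
def compression (e : κ → N → ℝ) (M : Matrix N N ℝ) : Matrix κ κ ℝ :=
  of fun a b => e a ⬝ᵥ (M *ᵥ e b)

theorem isHermitian_compression (e : κ → N → ℝ) {M : Matrix N N ℝ} (hM : Mᵀ = M) :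
    (compression e M).IsHermitian := by
  ext a b
  simp only [compression, conjTranspose_apply, of_apply, star_trivial]
  rw [dotProduct_mulVec, ← mulVec_transpose, hM, dotProduct_comm]

theorem dotProduct_compression_mulVec [Fintype κ] (e : κ → N → ℝ) (M : Matrix N N ℝ)
    (x : κ → ℝ) :
    x ⬝ᵥ (compression e M *ᵥ x) = (∑ a, x a • e a) ⬝ᵥ (M *ᵥ ∑ a, x a • e a) := by
  simp only [mulVec_sum, mulVec_smul, sum_dotProduct, dotProduct_sum, smul_dotProduct,
    dotProduct_smul, smul_eq_mul]
  change ∑ a, x a * ∑ b, (e a ⬝ᵥ (M *ᵥ e b)) * x b = _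
  simp only [Finset.mul_sum]
  rw [Finset.sum_comm]
  exact Finset.sum_congr rfl fun b _ => Finset.sum_congr rfl fun a _ => by ring

theorem dotProduct_self_sum_smul [Fintype κ] [DecidableEq κ] [DecidableEq N] {e : κ → N → ℝ}
    (he : ∀ a b, e a ⬝ᵥ e b = if a = b then 1 else 0) (x : κ → ℝ) :
    (∑ a, x a • e a) ⬝ᵥ (∑ a, x a • e a) = x ⬝ᵥ x := by
  have hI : compression e 1 = 1 := by
    ext a b
    simp [compression, he, one_apply]
  simpa [hI] using (dotProduct_compression_mulVec e 1 x).symm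

end Matrix

section Concentration

variable {Ω : Type*} [MeasurableSpace Ω] {μ : Measure Ω} {m n : ℕ}
  {E : Ω → Matrix (Fin m) (Fin n) ℝ} {C₁ c₁ γ : ℝ}

theorem Concentrated.measure_lt_abs_dotProduct_mulVec_le (hE : Concentrated μ E C₁ c₁ γ)
    {p : Fin m → ℝ} {q : Fin n → ℝ} (hpq : (p ⬝ᵥ p) * (q ⬝ᵥ q) ≤ 1) {s : ℝ} (hs : 0 < s) :
    μ {ω | s < |p ⬝ᵥ (E ω *ᵥ q)|} ≤ ENNReal.ofReal (C₁ * Real.exp (-c₁ * s ^ γ)) := by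
  by_cases hpq0 : p = 0 ∨ q = 0
  · have : {ω | s < |p ⬝ᵥ (E ω *ᵥ q)|} = ∅ := Set.eq_empty_of_forall_notMem fun ω => by
      rcases hpq0 with rfl | rfl <;> simpa using hs.le
    simp [this]
  obtain ⟨hp, hq⟩ := not_or.1 hpq0
  have hα := Real.sqrt_pos.2 (dotProduct_self_pos_of_ne_zero hp)
  have hβ := Real.sqrt_pos.2 (dotProduct_self_pos_of_ne_zero hq)
  have hαβ : √(p ⬝ᵥ p) * √(q ⬝ᵥ q) ≤ 1 := by
    rw [← Real.sqrt_mul (dotProduct_self_pos_of_ne_zero hp).le]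
    exact Real.sqrt_le_one.2 hpq
  refine (measure_mono fun ω hω => ?_).trans (hE _ _ (dotProduct_self_inv_sqrt_smul hp)
    (dotProduct_self_inv_sqrt_smul hq) s hs)
  have hfac : p ⬝ᵥ (E ω *ᵥ q) = (√(p ⬝ᵥ p) * √(q ⬝ᵥ q)) *
      (((√(p ⬝ᵥ p))⁻¹ • p) ⬝ᵥ (E ω *ᵥ ((√(q ⬝ᵥ q))⁻¹ • q))) := by
    rw [smul_dotProduct, mulVec_smul, dotProduct_smul, smul_eq_mul, smul_eq_mul]
    field_simp
  have hω : s < |p ⬝ᵥ (E ω *ᵥ q)| := hω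
  rw [hfac, abs_mul, abs_of_pos (mul_pos hα hβ)] at hω
  exact hω.trans_le (mul_le_of_le_one_left (abs_nonneg _) hαβ)

theorem Concentrated.measure_lt_abs_inner_compression_symMat_le
    (hE : Concentrated μ E C₁ c₁ γ) {κ : Type*} [Fintype κ] [DecidableEq κ]
    {e : κ → Fin (m + n) → ℝ} (he : ∀ a b, e a ⬝ᵥ e b = if a = b then 1 else 0)
    {x : EuclideanSpace ℝ κ} (hx : ‖x‖ = 1) {s : ℝ} (hs : 0 < s) :
    μ {ω | s < |⟪toEuclideanLin (compression e (symMat (E ω))) x, x⟫|} ≤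
      ENNReal.ofReal (C₁ * Real.exp (-c₁ * s ^ γ)) := by
  set y := ∑ a, x a • e a
  set p := y ∘ finSumFinEquiv ∘ Sum.inl
  set q := y ∘ finSumFinEquiv ∘ Sum.inr
  have hinner (ω : Ω) : ⟪toEuclideanLin (compression e (symMat (E ω))) x, x⟫ =
      ((2 : ℝ) • p) ⬝ᵥ (E ω *ᵥ q) := by
    change x.ofLp ⬝ᵥ (compression e (symMat (E ω)) *ᵥ x.ofLp) = _
    rw [dotProduct_compression_mulVec, dotProduct_symMat_mulVec, smul_dotProduct,
      smul_eq_mul]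
  have hpq : (((2 : ℝ) • p) ⬝ᵥ ((2 : ℝ) • p)) * (q ⬝ᵥ q) ≤ 1 := by
    have hy : p ⬝ᵥ p + q ⬝ᵥ q = 1 := by
      have hx2 : x.ofLp ⬝ᵥ x.ofLp = 1 := by
        rw [← one_pow 2, ← hx, ← real_inner_self_eq_norm_sq]
        rfl
      rw [← dotProduct_self_finSumFinEquiv, dotProduct_self_sum_smul he, hx2]
    simp only [smul_dotProduct, dotProduct_smul, smul_eq_mul]
    nlinarith [sq_nonneg (p ⬝ᵥ p - q ⬝ᵥ q)]
  simp_rw [hinner]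
  exact hE.measure_lt_abs_dotProduct_mulVec_le hpq hs

theorem Concentrated.measure_lt_spNorm_compression_symMat_le
    (hE : Concentrated μ E C₁ c₁ γ) {κ : Type*} [Fintype κ] [DecidableEq κ]
    {e : κ → Fin (m + n) → ℝ} (he : ∀ a b, e a ⬝ᵥ e b = if a = b then 1 else 0)
    {s : ℝ} (hs : 0 < s) :
    μ {ω | s < spNorm (compression e (symMat (E ω)))} ≤
      9 ^ Fintype.card κ * ENNReal.ofReal (C₁ * Real.exp (-c₁ * (s / 2) ^ γ)) := by
  obtain ⟨N, hNs, hNcard, hN⟩ :=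
    exists_finset_isCover_sphere (E := EuclideanSpace ℝ κ) (ε := 1 / 4) (by norm_num)
  have hcard : N.card ≤ 9 ^ Fintype.card κ := by
    norm_num [finrank_euclideanSpace] at hNcard
    rwa [← Nat.cast_ofNat, ← Nat.cast_pow, Nat.floor_natCast] at hNcard
  have hsub : {ω | s < spNorm (compression e (symMat (E ω)))} ⊆
      ⋃ x ∈ N, {ω | s / 2 <
        |⟪toEuclideanLin (compression e (symMat (E ω))) x, x⟫|} := by
    intro ω hω
    by_contra h
    simp only [Set.mem_iUnion, not_exists] at h
    have := ContinuousLinearMap.one_sub_two_mul_mul_norm_le_of_isCover_sphere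
      (T := LinearMap.toContinuousLinearMap
        (toEuclideanLin (compression e (symMat (E ω)))))
      (isSymmetric_toEuclideanLin_iff.2
        (isHermitian_compression e (transpose_symMat (E ω)))) hNs hN
      (half_pos hs).le fun x hx => not_lt.1 (h x hx)
    have hω : s < spNorm (compression e (symMat (E ω))) := hω
    rw [spNorm] at hω
    norm_num at this
    linarith
  calc _ ≤ _ := measure_mono hsub
    _ ≤ _ := measure_biUnion_finset_le _ _
    _ ≤ ∑ _x ∈ N, ENNReal.ofReal (C₁ * Real.exp (-c₁ * (s / 2) ^ γ)) :=
        Finset.sum_le_sum fun x hx =>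
          hE.measure_lt_abs_inner_compression_symMat_le he (by simpa using hNs hx) (half_pos hs)
    _ ≤ _ := by
        rw [Finset.sum_const, nsmul_eq_mul]
        gcongr
        exact_mod_cast hcard

end Concentration

theorem neg_mul_half_mul_rpow_one_div_rpow_le {c γ t r : ℝ} (hc : 0 ≤ c) (hγ : 0 < γ)
    (ht : 0 ≤ t) (hr : 0 ≤ r) :
    -c * (t * r ^ (1 / γ) / 2) ^ γ ≤ -(c / 2 ^ γ) * r * t ^ γ / 2 ^ γ := by
  have hpow : (t * r ^ (1 / γ) / 2) ^ γ = r * t ^ γ / 2 ^ γ := by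
    rw [Real.div_rpow (by positivity) zero_le_two, Real.mul_rpow ht (by positivity),
      ← Real.rpow_mul hr, one_div_mul_cancel hγ.ne', Real.rpow_one, mul_comm]
  have h2 : c * (r * t ^ γ / 2 ^ γ) / 2 ^ γ ≤ c * (r * t ^ γ / 2 ^ γ) :=
    div_le_self (by positivity) (Real.one_le_rpow one_le_two hγ.le)
  rw [hpow]
  linarith [show -(c / 2 ^ γ) * r * t ^ γ / 2 ^ γ = -(c * (r * t ^ γ / 2 ^ γ) / 2 ^ γ) by ring]

theorem stmt13_general {m n : ℕ} (C₁ c₁ γ : ℝ) (hC₁ : 0 < C₁) (hc₁ : 0 < c₁) (hγ : 0 < γ)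
    {Ω : Type*} [MeasurableSpace Ω] (μ : Measure Ω)
    (E : Ω → Matrix (Fin m) (Fin n) ℝ) (hE : Concentrated μ E C₁ c₁ γ)
    (r : ℕ)
    (u w : Fin r → Fin (m+n) → ℝ)
    (honb : ∀ a b : Fin r ⊕ Fin r,
      Sum.elim u w a ⬝ᵥ Sum.elim u w b = if a = b then 1 else 0)
    (t : ℝ) (ht : 0 < t) :
    μ {ω | t * (r : ℝ) ^ (1/γ) < spNorm (Matrix.of fun a b : Fin r ⊕ Fin r =>
        Sum.elim u w a ⬝ᵥ (symMat (E ω) *ᵥ Sum.elim u w b))} ≤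
      ENNReal.ofReal (2 * C₁ * 9 ^ (2 * r) *
        Real.exp (-(c₁ / 2 ^ γ) * r * t ^ γ / 2 ^ γ)) := by
  rcases Nat.eq_zero_or_pos r with rfl | hr
  · refine (measure_mono (t := ∅) fun ω hω => ?_).trans (by simp)
    simp [spNorm, Real.zero_rpow (inv_ne_zero hγ.ne')] at hω
  have hs : 0 < t * (r : ℝ) ^ (1 / γ) := by positivity
  have htail := hE.measure_lt_spNorm_compression_symMat_le honb hs
  rw [Fintype.card_sum, Fintype.card_fin, ← two_mul] at htail
  refine htail.trans ?_
  rw [← ENNReal.ofReal_ofNat, ← ENNReal.ofReal_pow (by norm_num),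
    ← ENNReal.ofReal_mul (by positivity)]
  refine ENNReal.ofReal_le_ofReal ?_
  have hexp := Real.exp_le_exp.2
    (neg_mul_half_mul_rpow_one_div_rpow_le hc₁.le hγ ht.le (Nat.cast_nonneg r))
  have hB : 0 ≤ C₁ * 9 ^ (2 * r) * Real.exp (-(c₁ / 2 ^ γ) * r * t ^ γ / 2 ^ γ) := by positivity
  nlinarith [mul_le_mul_of_nonneg_left hexp (by positivity : (0 : ℝ) ≤ 9 ^ (2 * r) * C₁)]

theorem stmt13 {m n : ℕ} (C₁ c₁ γ : ℝ) (hC₁ : 0 < C₁) (hc₁ : 0 < c₁) (hγ : 0 < γ)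
    {Ω : Type*} [MeasurableSpace Ω] (μ : Measure Ω) [IsProbabilityMeasure μ]
    (E : Ω → Matrix (Fin m) (Fin n) ℝ) (hE : Concentrated μ E C₁ c₁ γ)
    (A : Matrix (Fin m) (Fin n) ℝ) (r : ℕ) (hr : A.rank = r) (hσr : 0 < sval A r)
    (u w : Fin r → Fin (m+n) → ℝ)
    (honb : ∀ a b : Fin r ⊕ Fin r,
      Sum.elim u w a ⬝ᵥ Sum.elim u w b = if a = b then 1 else 0)
    (hu : ∀ k : Fin r, symMat A *ᵥ u k = sval A ((k : ℕ) + 1) • u k)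
    (hw : ∀ k : Fin r, symMat A *ᵥ w k = -sval A ((k : ℕ) + 1) • w k)
    (t : ℝ) (ht : 0 < t) :
    μ {ω | t * (r : ℝ) ^ (1/γ) < spNorm (Matrix.of fun a b : Fin r ⊕ Fin r =>
        Sum.elim u w a ⬝ᵥ (symMat (E ω) *ᵥ Sum.elim u w b))} ≤
      ENNReal.ofReal (2 * C₁ * 9 ^ (2 * r) *
        Real.exp (-(c₁ / 2 ^ γ) * r * t ^ γ / 2 ^ γ)) :=
  stmt13_general C₁ c₁ γ hC₁ hc₁ hγ μ E hE r u w honb t ht
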